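/- arXiv:1704.08060 — 5 statements merged into one kernel-verified Lean document; each statement's English description precedes it below -/
import Mathlib

section
/- Let n be a positive integer and N = (2n+2)(4^(2n+2)+1). For any sequence b_1,...,b_N of integers with 1 ≤ b_i ≤ 4 for all i, there exist indices n_1 ≠ n_2 with n_1 ≡ n_2 (mod 2) such that b_{n_1+i} = b_{n_2+i} for all 0 ≤ i ≤ 2n+1. -/
open Filter

/-- Numerators of the convergents of the continued fraction `[a 0; a 1, a 2, ...]`. -/
def cfNum (a : ℕ → ℤ) : ℕ → ℤ
  | 0 => a 0
  | 1 => a 1 * a 0 + 1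
  | n + 2 => a (n + 2) * cfNum a (n + 1) + cfNum a n

/-- Denominators of the convergents of the continued fraction `[a 0; a 1, a 2, ...]`. -/
def cfDen (a : ℕ → ℤ) : ℕ → ℤ
  | 0 => 1
  | 1 => a 1
  | n + 2 => a (n + 2) * cfDen a (n + 1) + cfDen a n

/-- Value of the infinite continued fraction `[a 0; a 1, a 2, ...]`, as the limit of
its convergents. -/
noncomputable def cfVal (a : ℕ → ℤ) : ℝ :=
  limUnder atTop fun n => (cfNum a n : ℝ) / (cfDen a n : ℝ)

/-- Value of the infinite continued fraction `[0; s 0, s 1, s 2, ...]`. -/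
noncomputable def cfZero (s : ℕ → ℤ) : ℝ :=
  cfVal fun n => if n = 0 then 0 else s (n - 1)

/-- Value of the finite continued fraction `[0; l]`. -/
noncomputable def cfFin : List ℤ → ℝ
  | [] => 0
  | x :: xs => 1 / ((x : ℝ) + cfFin xs)

/-- `λ_i(α) = [a_i; a_{i+1}, ...] + [0; a_{i-1}, ..., a_1]` for `α = [a 0; a 1, a 2, ...]`. -/
noncomputable def lambdaCF (a : ℕ → ℤ) (i : ℕ) : ℝ :=
  cfVal (fun n => a (i + n)) + cfFin ((List.range (i - 1)).map fun j => a (i - 1 - j))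

/-- `λ_i(B) = [b_i; b_{i-1}, ...] + [0; b_{i+1}, ...]` for a doubly infinite sequence. -/
noncomputable def lambdaZ (b : ℤ → ℤ) (i : ℤ) : ℝ :=
  cfVal (fun n => b (i - n)) + cfVal fun n => if n = 0 then 0 else b (i + n)

/-- `M(B) = sup_i λ_i(B)`. -/
noncomputable def MZ (b : ℤ → ℤ) : ℝ := ⨆ i : ℤ, lambdaZ b i

/-- The Lagrange constant `μ(α)`, defined by
`μ(α)⁻¹ = liminf_{p ∈ ℤ, q ∈ ℕ} |q (q α - p)|`. -/
noncomputable def lagrangeConst (α : ℝ) : ℝ :=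
  (liminf (fun q : ℕ => ⨅ p : ℤ, |(q : ℝ) * ((q : ℝ) * α - (p : ℝ))|) atTop)⁻¹

/-- `α` is attainable: `|α - p/q| ≤ 1/(μ(α) q²)` has infinitely many integer solutions. -/
def Attainable (α : ℝ) : Prop :=
  {pq : ℤ × ℤ | 0 < pq.2 ∧
    |α - (pq.1 : ℝ) / (pq.2 : ℝ)| ≤ 1 / (lagrangeConst α * (pq.2 : ℝ) ^ 2)}.Infinite

/-- The Lagrange spectrum: the set of values of `μ(α)` over irrational `α`. -/
def LagrangeSpectrum : Set ℝ := {x | ∃ α : ℝ, Irrational α ∧ lagrangeConst α = x}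

/-- The doubly infinite sequence `b` is weakly associated with the number whose partial
quotients are `a 1, a 2, ...`: every central pattern `(b_{-i}, ..., b_i)` occurs
infinitely often in `(a 1, a 2, ...)`. -/
def WeaklyAssoc (b : ℤ → ℤ) (a : ℕ → ℤ) : Prop :=
  ∀ i : ℕ, ∃ᶠ k in atTop, ∀ j : ℕ, j ≤ 2 * i → a (k + 1 + j) = b ((j : ℤ) - (i : ℤ))

/-- Dirichlet-type lemma: in any `{1,...,4}`-valued sequence of length
`N = (2n+2)(4^(2n+2)+1)` there are two occurrences, at indices of the same parity,
of a common block of length `2n+2`. -/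
theorem stmt0 (n : ℕ) (hn : 0 < n) (N : ℕ) (hN : N = (2 * n + 2) * (4 ^ (2 * n + 2) + 1))
    (b : ℕ → ℤ) (hb : ∀ i, 1 ≤ i → i ≤ N → 1 ≤ b i ∧ b i ≤ 4) :
    ∃ n₁ n₂ : ℕ, n₁ ≠ n₂ ∧ 1 ≤ n₁ ∧ 1 ≤ n₂ ∧ n₁ + (2 * n + 1) ≤ N ∧ n₂ + (2 * n + 1) ≤ N ∧
      n₁ % 2 = n₂ % 2 ∧ ∀ i, i ≤ 2 * n + 1 → b (n₁ + i) = b (n₂ + i) := by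
  set L := 2 * n + 2 with hL
  set K := 4 ^ L with hK
  -- block starting positions: 1 + k * L for k : Fin (K+1)
  have hstart : ∀ k : ℕ, k ≤ K → ∀ i : ℕ, i ≤ 2 * n + 1 →
      1 ≤ 1 + k * L + i ∧ 1 + k * L + i ≤ N := by
    intro k hk i hi
    constructor
    · omega
    · have : k * L ≤ K * L := Nat.mul_le_mul_right L hk
      have : 1 + k * L + i ≤ 1 + K * L + (2 * n + 1) := by omega
      have hN' : N = L * (K + 1) := by rw [hN]
      nlinarith [Nat.mul_le_mul_right L hk]
  have hval : ∀ k : ℕ, k ≤ K → ∀ i : ℕ, i ≤ 2 * n + 1 →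
      ((b (1 + k * L + i)).toNat - 1) < 4 := by
    intro k hk i hi
    obtain ⟨h1, h2⟩ := hstart k hk i hi
    obtain ⟨hb1, hb2⟩ := hb _ h1 h2
    omega
  let f : Fin (K + 1) → (Fin L → Fin 4) := fun k i =>
    ⟨(b (1 + (k : ℕ) * L + (i : ℕ))).toNat - 1,
      hval k (Nat.lt_succ_iff.mp k.isLt) i (by omega)⟩
  have hcard : Fintype.card (Fin L → Fin 4) < Fintype.card (Fin (K + 1)) := by
    simp [Fintype.card_fun, hK]
  obtain ⟨k₁, k₂, hne, heq⟩ := Fintype.exists_ne_map_eq_of_card_lt f hcard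
  refine ⟨1 + (k₁ : ℕ) * L, 1 + (k₂ : ℕ) * L, ?_, by omega, by omega, ?_, ?_, ?_, ?_⟩
  · intro h
    apply hne
    have hLpos : 0 < L := by omega
    have : (k₁ : ℕ) = (k₂ : ℕ) := by
      have := Nat.eq_of_mul_eq_mul_right hLpos (by omega : (k₁ : ℕ) * L = (k₂ : ℕ) * L)
      exact this
    exact Fin.ext this
  · exact (hstart k₁ (Nat.lt_succ_iff.mp k₁.isLt) (2 * n + 1) le_rfl).2
  · exact (hstart k₂ (Nat.lt_succ_iff.mp k₂.isLt) (2 * n + 1) le_rfl).2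
  · have h1 : 1 + (k₁ : ℕ) * L = 1 + 2 * ((k₁ : ℕ) * (n + 1)) := by rw [hL]; ring
    have h2 : 1 + (k₂ : ℕ) * L = 1 + 2 * ((k₂ : ℕ) * (n + 1)) := by rw [hL]; ring
    omega
  · intro i hi
    have hfi := congrFun heq ⟨i, by omega⟩
    have : (b (1 + (k₁ : ℕ) * L + i)).toNat - 1 = (b (1 + (k₂ : ℕ) * L + i)).toNat - 1 :=
      congrArg Fin.val hfi
    obtain ⟨ha1, ha2⟩ := hstart k₁ (Nat.lt_succ_iff.mp k₁.isLt) i hi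
    obtain ⟨hc1, hc2⟩ := hstart k₂ (Nat.lt_succ_iff.mp k₂.isLt) i hi
    obtain ⟨hb1, hb2⟩ := hb _ ha1 ha2
    obtain ⟨hb3, hb4⟩ := hb _ hc1 hc2
    omega
end

section
/- Let w = [0; a_1, a_2, ...] be an infinite continued fraction whose partial quotients all belong to {1, 2} and whose partial quotient sequence contains no occurrence of the consecutive pattern (2,1,2,1). Then w ≥ w_0, where w_0 = [0; 2,1,2,2, 2,1,2,2, ...] is the periodic continued fraction with period (2,1,2,2). -/
open Filter

/-- The purely periodic sequence with period `(2,1,2,2)`. -/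
def w0seq : ℕ → ℤ := fun k => if k % 4 = 1 then 1 else 2

/-
Let `m` be the infimum of `[0; s]` over admissible sequences `s`. Unwinding the first partial
quotients shows that `[0; s] ≥ 3/8` unless `s` begins with `2,1,2,2`, and then
`[0; s] = f [0; s₄, s₅, …]` for the increasing map `f t = [0; 2, 1, 2, 2 + t]`.
Hence `m ≥ min (3/8) (f m)`. But `w₀ < 3/8` is the fixed point of `f`, and `f t > t` for
`0 ≤ t < w₀`, so `m ≥ w₀`.
-/

open Topology

section Convergents

variable {a : ℕ → ℤ}

lemma cfNum_add_two (a : ℕ → ℤ) (n : ℕ) :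
    cfNum a (n + 2) = a (n + 2) * cfNum a (n + 1) + cfNum a n := rfl

lemma cfDen_add_two (a : ℕ → ℤ) (n : ℕ) :
    cfDen a (n + 2) = a (n + 2) * cfDen a (n + 1) + cfDen a n := rfl

lemma cfNum_succ_mul_cfDen_sub (a : ℕ → ℤ) (n : ℕ) :
    cfNum a (n + 1) * cfDen a n - cfNum a n * cfDen a (n + 1) = (-1) ^ n := by
  induction n with
  | zero => simp only [cfNum, cfDen]; ring
  | succ n ih =>
    rw [cfNum_add_two, cfDen_add_two, pow_succ]
    linear_combination (-1 : ℤ) * ih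

lemma cfNum_succ (a : ℕ → ℤ) (n : ℕ) :
    cfNum a (n + 1) = a 0 * cfNum (fun k => a (k + 1)) n + cfDen (fun k => a (k + 1)) n := by
  induction n using Nat.twoStepInduction with
  | zero => simp only [cfNum, cfDen]; ring
  | one => simp only [cfNum, cfDen]; ring
  | more n ih₁ ih₂ => rw [cfNum_add_two, ih₁, ih₂, cfNum_add_two, cfDen_add_two]; ring

lemma cfDen_succ (a : ℕ → ℤ) (n : ℕ) : cfDen a (n + 1) = cfNum (fun k => a (k + 1)) n := by
  induction n using Nat.twoStepInduction with
  | zero => simp [cfNum, cfDen]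
  | one => simp [cfNum, cfDen]
  | more n ih₁ ih₂ => rw [cfDen_add_two, ih₁, ih₂, cfNum_add_two]

lemma one_le_cfDen (ha : ∀ n, 1 ≤ a (n + 1)) (n : ℕ) : 1 ≤ cfDen a n := by
  induction n using Nat.twoStepInduction with
  | zero => simp [cfDen]
  | one => simpa [cfDen] using ha 0
  | more n ih₁ ih₂ => rw [cfDen_add_two]; nlinarith [ha (n + 1)]

lemma natCast_le_cfDen (ha : ∀ n, 1 ≤ a (n + 1)) (n : ℕ) : (n : ℤ) ≤ cfDen a n := by
  induction n using Nat.twoStepInduction with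
  | zero => simp [cfDen]
  | one => simpa [cfDen] using ha 0
  | more n ih₁ ih₂ =>
    rw [cfDen_add_two]; push_cast at ih₂ ⊢
    nlinarith [ha (n + 1), one_le_cfDen ha n]

lemma mul_cfDen_le_cfNum (ha : ∀ n, 1 ≤ a (n + 1)) (n : ℕ) : a 0 * cfDen a n ≤ cfNum a n := by
  induction n using Nat.twoStepInduction with
  | zero => simp [cfNum, cfDen]
  | one => simp only [cfNum, cfDen]; linarith
  | more n ih₁ ih₂ =>
    rw [cfNum_add_two, cfDen_add_two]
    nlinarith [mul_le_mul_of_nonneg_left ih₂ (by linarith [ha (n + 1)] : 0 ≤ a (n + 2))]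

lemma cfNum_le_mul_cfDen (ha : ∀ n, 1 ≤ a (n + 1)) (n : ℕ) :
    cfNum a n ≤ (a 0 + 1) * cfDen a n := by
  induction n using Nat.twoStepInduction with
  | zero => simp [cfNum, cfDen]
  | one => simp only [cfNum, cfDen]; linarith [ha 0]
  | more n ih₁ ih₂ =>
    rw [cfNum_add_two, cfDen_add_two]
    nlinarith [mul_le_mul_of_nonneg_left ih₂ (by linarith [ha (n + 1)] : 0 ≤ a (n + 2))]

noncomputable def cfConv (a : ℕ → ℤ) (n : ℕ) : ℝ := cfNum a n / cfDen a n

lemma cfDen_pos (ha : ∀ n, 1 ≤ a (n + 1)) (n : ℕ) : (0 : ℝ) < cfDen a n := by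
  exact_mod_cast one_le_cfDen ha n

lemma dist_cfConv_succ (ha : ∀ n, 1 ≤ a (n + 1)) (n : ℕ) :
    dist (cfConv a n) (cfConv a (n + 1)) = 1 / (cfDen a n * cfDen a (n + 1)) := by
  have h₀ := cfDen_pos ha n
  have h₁ := cfDen_pos ha (n + 1)
  have hdet : (cfNum a (n + 1) * cfDen a n - cfDen a (n + 1) * cfNum a n : ℝ) = (-1) ^ n := by
    rw [mul_comm (cfDen a (n + 1) : ℝ)]
    exact_mod_cast cfNum_succ_mul_cfDen_sub a n
  rw [dist_comm, Real.dist_eq, cfConv, cfConv, div_sub_div _ _ h₁.ne' h₀.ne', hdet,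
    abs_div, abs_pow, abs_neg, abs_one, one_pow, abs_of_pos (by positivity), mul_comm]

lemma dist_cfConv_succ_le (ha : ∀ n, 1 ≤ a (n + 1)) (n : ℕ) :
    dist (cfConv a n) (cfConv a (n + 1)) ≤ 2 * (1 / ((n + 1 : ℕ) : ℝ) ^ 2) := by
  have h₀ : (n + 1 : ℝ) ≤ 2 * cfDen a n := by
    have := natCast_le_cfDen ha n
    have := one_le_cfDen ha n
    exact_mod_cast (by linarith : ((n : ℤ) + 1 ≤ 2 * cfDen a n))
  have h₁ : (n + 1 : ℝ) ≤ cfDen a (n + 1) := by exact_mod_cast natCast_le_cfDen ha (n + 1)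
  have hq := mul_pos (cfDen_pos ha n) (cfDen_pos ha (n + 1))
  rw [dist_cfConv_succ ha, mul_one_div, div_le_div_iff₀ hq (by positivity)]
  push_cast
  nlinarith [mul_le_mul h₀ h₁ (by positivity) (by linarith)]

lemma cauchySeq_cfConv (ha : ∀ n, 1 ≤ a (n + 1)) : CauchySeq (cfConv a) := by
  have hsum : Summable fun n : ℕ => 2 * (1 / ((n + 1 : ℕ) : ℝ) ^ 2) :=
    ((summable_nat_add_iff 1).mpr (Real.summable_one_div_nat_pow.mpr one_lt_two)).mul_left 2
  exact cauchySeq_of_summable_dist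
    (.of_nonneg_of_le (fun _ => dist_nonneg) (dist_cfConv_succ_le ha) hsum)

lemma tendsto_cfConv (ha : ∀ n, 1 ≤ a (n + 1)) : Tendsto (cfConv a) atTop (𝓝 (cfVal a)) := by
  obtain ⟨L, hL⟩ := cauchySeq_tendsto_of_complete (cauchySeq_cfConv ha)
  rwa [show cfVal a = L from hL.limUnder_eq]

lemma cfVal_mem_Icc (ha : ∀ n, 1 ≤ a (n + 1)) : cfVal a ∈ Set.Icc (a 0 : ℝ) (a 0 + 1) := by
  refine isClosed_Icc.mem_of_tendsto (tendsto_cfConv ha) (.of_forall fun n => ?_)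
  have hq := cfDen_pos ha n
  rw [Set.mem_Icc, cfConv, le_div_iff₀ hq, div_le_iff₀ hq]
  exact ⟨by exact_mod_cast mul_cfDen_le_cfNum ha n, by exact_mod_cast cfNum_le_mul_cfDen ha n⟩

lemma one_le_cfVal (ha : ∀ n, 1 ≤ a n) : 1 ≤ cfVal a :=
  le_trans (by exact_mod_cast ha 0) (cfVal_mem_Icc fun n => ha (n + 1)).1

lemma cfConv_succ (ha : ∀ n, 1 ≤ a (n + 1)) (n : ℕ) :
    cfConv a (n + 1) = a 0 + (cfConv (fun k => a (k + 1)) n)⁻¹ := by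
  have hp : (0 : ℝ) < cfNum (fun k => a (k + 1)) n := by
    rw [← cfDen_succ]; exact cfDen_pos ha (n + 1)
  rw [cfConv, cfConv, cfNum_succ, cfDen_succ, inv_div]
  push_cast
  field_simp

lemma cfVal_eq_add_inv (ha : ∀ n, 1 ≤ a (n + 1)) :
    cfVal a = a 0 + (cfVal fun n => a (n + 1))⁻¹ := by
  have ha' : ∀ n, 1 ≤ (fun k => a (k + 1)) (n + 1) := fun n => ha (n + 1)
  have hpos : (0 : ℝ) < cfVal fun n => a (n + 1) := one_pos.trans_le (one_le_cfVal ha)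
  refine tendsto_nhds_unique ((tendsto_cfConv ha).comp (tendsto_add_atTop_nat 1)) ?_
  simp only [Function.comp_def, cfConv_succ ha]
  exact tendsto_const_nhds.add ((tendsto_cfConv ha').inv₀ hpos.ne')

end Convergents

section ZeroIntegerPart

variable {s : ℕ → ℤ}

lemma cfZero_eq_inv_cfVal (hs : ∀ n, 1 ≤ s n) : cfZero s = (cfVal s)⁻¹ := by
  rw [cfZero, cfVal_eq_add_inv (by simpa using hs)]
  simp

lemma cfZero_eq_inv_add (hs : ∀ n, 1 ≤ s n) :
    cfZero s = (s 0 + cfZero fun n => s (n + 1))⁻¹ := by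
  rw [cfZero_eq_inv_cfVal hs, cfVal_eq_add_inv (fun n => hs (n + 1)),
    cfZero_eq_inv_cfVal (fun n => hs (n + 1))]

lemma cfZero_shift_eq_inv_add (hs : ∀ n, 1 ≤ s n) (k : ℕ) :
    (cfZero fun n => s (n + k)) = (s k + cfZero fun n => s (n + (k + 1)))⁻¹ := by
  rw [cfZero_eq_inv_add (s := fun n => s (n + k)) (fun n => hs (n + k))]
  simp only [zero_add, add_right_comm _ 1 k, add_assoc]

lemma cfZero_pos (hs : ∀ n, 1 ≤ s n) : 0 < cfZero s := by
  rw [cfZero_eq_inv_cfVal hs]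
  exact inv_pos.mpr (one_pos.trans_le (one_le_cfVal hs))

lemma cfZero_le_one (hs : ∀ n, 1 ≤ s n) : cfZero s ≤ 1 := by
  rw [cfZero_eq_inv_cfVal hs]
  exact inv_le_one_of_one_le₀ (one_le_cfVal hs)

end ZeroIntegerPart

def Admissible (s : ℕ → ℤ) : Prop :=
  (∀ n, s n = 1 ∨ s n = 2) ∧ ¬ ∃ i, s i = 2 ∧ s (i + 1) = 1 ∧ s (i + 2) = 2 ∧ s (i + 3) = 1

namespace Admissible

variable {s : ℕ → ℤ}

lemma one_le (hs : Admissible s) (n : ℕ) : 1 ≤ s n := by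
  rcases hs.1 n with h | h <;> omega

lemma shift (hs : Admissible s) (k : ℕ) : Admissible fun n => s (n + k) := by
  refine ⟨fun n => hs.1 (n + k), fun ⟨i, hi⟩ => hs.2 ⟨i + k, ?_⟩⟩
  simpa only [add_right_comm _ _ k] using hi

end Admissible

/-- `blockMap t = [0; 2, 1, 2, 2 + t]`. -/
noncomputable def blockMap (t : ℝ) : ℝ := (7 + 3 * t) / (19 + 8 * t)

lemma blockMap_le_blockMap {x y : ℝ} (hx : 0 ≤ x) (hxy : x ≤ y) : blockMap x ≤ blockMap y := by
  rw [blockMap, blockMap, div_le_div_iff₀ (by linarith) (by linarith)]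
  linarith

lemma cfZero_eq_blockMap {s : ℕ → ℤ} (hs : ∀ n, 1 ≤ s n)
    (h₀ : s 0 = 2) (h₁ : s 1 = 1) (h₂ : s 2 = 2) (h₃ : s 3 = 2) :
    cfZero s = blockMap (cfZero fun n => s (n + 4)) := by
  have e₁ : (cfZero fun n => s (n + 1)) = (s 1 + cfZero fun n => s (n + 2))⁻¹ :=
    cfZero_shift_eq_inv_add hs 1
  have e₂ : (cfZero fun n => s (n + 2)) = (s 2 + cfZero fun n => s (n + 3))⁻¹ :=
    cfZero_shift_eq_inv_add hs 2
  have e₃ : (cfZero fun n => s (n + 3)) = (s 3 + cfZero fun n => s (n + 4))⁻¹ :=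
    cfZero_shift_eq_inv_add hs 3
  have ht := cfZero_pos fun n => hs (n + 4)
  rw [cfZero_eq_inv_add hs, e₁, e₂, e₃, h₀, h₁, h₂, h₃, blockMap]
  generalize (cfZero fun n => s (n + 4)) = t at ht ⊢
  push_cast
  field_simp
  ring

lemma three_eighths_le_cfZero_or_eq_blockMap {s : ℕ → ℤ} (hs : Admissible s) :
    3 / 8 ≤ cfZero s ∨ cfZero s = blockMap (cfZero fun n => s (n + 4)) := by
  have e₁ : (cfZero fun n => s (n + 1)) = (s 1 + cfZero fun n => s (n + 2))⁻¹ :=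
    cfZero_shift_eq_inv_add hs.one_le 1
  have e₂ : (cfZero fun n => s (n + 2)) = (s 2 + cfZero fun n => s (n + 3))⁻¹ :=
    cfZero_shift_eq_inv_add hs.one_le 2
  have hv₁ := cfZero_le_one (hs.shift 1).one_le
  have hv₁' := cfZero_pos (hs.shift 1).one_le
  have hv₂ := cfZero_pos (hs.shift 2).one_le
  have hv₃ := cfZero_le_one (hs.shift 3).one_le
  have hv₃' := cfZero_pos (hs.shift 3).one_le
  rw [cfZero_eq_inv_add hs.one_le]
  rcases hs.1 0 with h₀ | h₀
  · left
    rw [h₀]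
    calc (3 / 8 : ℝ) ≤ ((1 : ℤ) + 1 : ℝ)⁻¹ := by norm_num
      _ ≤ _ := by gcongr
  rcases hs.1 1 with h₁ | h₁
  swap
  · left
    rw [e₁, h₀, h₁]
    calc (3 / 8 : ℝ) ≤ ((2 : ℤ) + ((2 : ℤ) + 0 : ℝ)⁻¹ : ℝ)⁻¹ := by norm_num
      _ ≤ _ := by gcongr
  rcases hs.1 2 with h₂ | h₂
  · left
    rw [e₁, e₂, h₀, h₁, h₂]
    calc (3 / 8 : ℝ) ≤ ((2 : ℤ) + ((1 : ℤ) + ((1 : ℤ) + 1 : ℝ)⁻¹ : ℝ)⁻¹ : ℝ)⁻¹ := by norm_num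
      _ ≤ _ := by gcongr
  · have h₃ : s 3 = 2 := (hs.1 3).resolve_left fun h₃ => hs.2 ⟨0, h₀, h₁, h₂, h₃⟩
    rw [← cfZero_eq_inv_add hs.one_le]
    exact .inr (cfZero_eq_blockMap hs.one_le h₀ h₁ h₂ h₃)

lemma w0seq_one_le (n : ℕ) : 1 ≤ w0seq n := by
  unfold w0seq; split <;> norm_num

lemma cfZero_w0seq_eq_blockMap : cfZero w0seq = blockMap (cfZero w0seq) := by
  have hperiod : (fun n => w0seq (n + 4)) = w0seq := by
    funext n; simp [w0seq, Nat.add_mod_right]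
  conv_rhs => rw [← hperiod]
  exact cfZero_eq_blockMap w0seq_one_le rfl rfl rfl rfl

lemma cfZero_w0seq_quadratic : 8 * cfZero w0seq ^ 2 + 16 * cfZero w0seq - 7 = 0 := by
  have h := cfZero_w0seq_eq_blockMap
  have hw := cfZero_pos w0seq_one_le
  rw [blockMap, eq_div_iff (by linarith)] at h
  linear_combination h

lemma cfZero_w0seq_le_of_min_le {m : ℝ} (hm : 0 ≤ m) (h : min (3 / 8) (blockMap m) ≤ m) :
    cfZero w0seq ≤ m := by
  have hq := cfZero_w0seq_quadratic
  have hw := cfZero_pos w0seq_one_le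
  by_contra! hlt
  rcases min_le_iff.mp h with h | h
  · nlinarith
  · rw [blockMap, div_le_iff₀ (by linarith)] at h
    nlinarith

/-- Any continued fraction `[0; a 0, a 1, ...]` with partial quotients in `{1,2}` and no
occurrence of the pattern `(2,1,2,1)` is at least `w₀ = [0; 2,1,2,2, 2,1,2,2, ...]`. -/
theorem stmt5 (a : ℕ → ℤ) (ha : ∀ n, a n = 1 ∨ a n = 2)
    (hpat : ¬ ∃ i : ℕ, a i = 2 ∧ a (i + 1) = 1 ∧ a (i + 2) = 2 ∧ a (i + 3) = 1) :
    cfZero w0seq ≤ cfZero a := by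
  set V := cfZero '' {s | Admissible s}
  have hV : V.Nonempty := ⟨_, a, ⟨ha, hpat⟩, rfl⟩
  have hV₀ : ∀ v ∈ V, 0 ≤ v := by
    rintro _ ⟨s, hs, rfl⟩
    exact (cfZero_pos hs.one_le).le
  have hbdd : BddBelow V := ⟨0, hV₀⟩
  have hm₀ : 0 ≤ sInf V := le_csInf hV hV₀
  have hm : min (3 / 8) (blockMap (sInf V)) ≤ sInf V := by
    refine le_csInf hV ?_
    rintro _ ⟨s, hs, rfl⟩
    rcases three_eighths_le_cfZero_or_eq_blockMap hs with h | h
    · exact (min_le_left _ _).trans h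
    · rw [h]
      exact (min_le_right _ _).trans
        (blockMap_le_blockMap hm₀ (csInf_le hbdd ⟨_, hs.shift 4, rfl⟩))
  exact (cfZero_w0seq_le_of_min_le hm₀ hm).trans (csInf_le hbdd ⟨a, ⟨ha, hpat⟩, rfl⟩)
end

section
/- The sequence α_n* = 2 + [0; 1,...,1 (2n−2 ones), \overline{2,2,1,2}] + [0; 1,...,1 (2n−1 ones), 2, 1,...,1 (2n−2 ones), \overline{2,2,1,2}] converges to 1 + √5 as n → ∞, and in particular [0; \overline{1}] = (√5 − 1)/2 so that 2 + 2[0;\overline{1}] = 1 + √5. -/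
open Filter

/-- The purely periodic sequence with period `(2,2,1,2)`. -/
def per2212 : ℕ → ℤ := fun k => if k % 4 = 2 then 1 else 2

/-- `2n-2` ones followed by `\overline{2,2,1,2}`. -/
def alphaStarSeq1 (n : ℕ) : ℕ → ℤ := fun k =>
  if k < 2 * n - 2 then 1 else per2212 (k - (2 * n - 2))

/-- `2n-1` ones, a `2`, `2n-2` ones, then `\overline{2,2,1,2}`. -/
def alphaStarSeq2 (n : ℕ) : ℕ → ℤ := fun k =>
  if k < 2 * n - 1 then 1 else if k = 2 * n - 1 then 2 else alphaStarSeq1 n (k - 2 * n)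

/-- The left endpoint `α_n*` of the `n`-th Gbur gap. -/
noncomputable def alphaStar (n : ℕ) : ℝ :=
  2 + cfZero (alphaStarSeq1 n) + cfZero (alphaStarSeq2 n)
/-! ### Auxiliary development -/

namespace CFAux

/-- Convergents as real numbers. -/
noncomputable def cfX (a : ℕ → ℤ) (n : ℕ) : ℝ := (cfNum a n : ℝ) / (cfDen a n : ℝ)

lemma cfDen_fib (a : ℕ → ℤ) (ha : ∀ k, 1 ≤ a (k + 1)) :
    ∀ n, (Nat.fib (n + 1) : ℤ) ≤ cfDen a n := by
  have H : ∀ n, (Nat.fib (n + 1) : ℤ) ≤ cfDen a n ∧ (Nat.fib (n + 2) : ℤ) ≤ cfDen a (n + 1) := by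
    intro n
    induction n with
    | zero =>
      constructor
      · simp [cfDen]
      · simpa [cfDen] using ha 0
    | succ m ih =>
      refine ⟨ih.2, ?_⟩
      have h1 := ih.1
      have h2 := ih.2
      have ha2 := ha (m + 1)
      have hq1 : (1 : ℤ) ≤ cfDen a (m + 1) := by
        have : (1 : ℤ) ≤ (Nat.fib (m + 2) : ℤ) := by
          exact_mod_cast Nat.fib_pos.2 (by omega)
        linarith
      rw [show m + 1 + 1 = m + 2 from rfl, cfDen]
      have hf : Nat.fib (m + 3) = Nat.fib (m + 1) + Nat.fib (m + 2) := Nat.fib_add_two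
      rw [show m + 2 + 1 = m + 3 from rfl, hf]
      push_cast
      nlinarith
  exact fun n => (H n).1

lemma cfDen_ge_one (a : ℕ → ℤ) (ha : ∀ k, 1 ≤ a (k + 1)) (n : ℕ) : 1 ≤ cfDen a n := by
  have := cfDen_fib a ha n
  have h : (1 : ℤ) ≤ (Nat.fib (n + 1) : ℤ) := by exact_mod_cast Nat.fib_pos.2 (by omega)
  linarith

lemma cfDen_pos_real (a : ℕ → ℤ) (ha : ∀ k, 1 ≤ a (k + 1)) (n : ℕ) :
    (0 : ℝ) < (cfDen a n : ℝ) := by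
  have := cfDen_ge_one a ha n
  exact_mod_cast lt_of_lt_of_le one_pos this

lemma cfDen_succ_ge (a : ℕ → ℤ) (ha : ∀ k, 1 ≤ a (k + 1)) (m : ℕ) (hm : 1 ≤ m) :
    cfDen a m + 1 ≤ cfDen a (m + 1) := by
  obtain ⟨k, rfl⟩ : ∃ k, m = k + 1 := ⟨m - 1, by omega⟩
  rw [show k + 1 + 1 = k + 2 from rfl, cfDen]
  have h1 := cfDen_ge_one a ha k
  have h2 := cfDen_ge_one a ha (k + 1)
  have h3 := ha (k + 1)
  nlinarith

lemma cf_det (a : ℕ → ℤ) :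
    ∀ n, cfNum a (n + 1) * cfDen a n - cfNum a n * cfDen a (n + 1) = (-1) ^ n := by
  intro n
  induction n with
  | zero => simp [cfNum, cfDen]; ring
  | succ m ih =>
    rw [show m + 1 + 1 = m + 2 from rfl, cfNum, cfDen]
    ring_nf
    ring_nf at ih
    linear_combination -ih

lemma cf_abs_diff (a : ℕ → ℤ) (ha : ∀ k, 1 ≤ a (k + 1)) (n : ℕ) :
    |cfX a (n + 1) - cfX a n| = 1 / ((cfDen a n : ℝ) * (cfDen a (n + 1) : ℝ)) := by
  have hq := cfDen_pos_real a ha n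
  have hq1 := cfDen_pos_real a ha (n + 1)
  have hdet := cf_det a n
  have hnum : (cfNum a (n + 1) : ℝ) * (cfDen a n : ℝ) - (cfDen a (n + 1) : ℝ) * (cfNum a n : ℝ)
      = (-1 : ℝ) ^ n := by
    have h2 : ((cfNum a (n + 1) * cfDen a n - cfNum a n * cfDen a (n + 1) : ℤ) : ℝ)
        = (((-1 : ℤ) ^ n : ℤ) : ℝ) := by exact_mod_cast congrArg (fun z : ℤ => (z : ℝ)) hdet
    push_cast at h2
    linarith [h2]
  rw [cfX, cfX, div_sub_div _ _ hq1.ne' hq.ne', hnum, abs_div]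
  rw [abs_pow, abs_neg, abs_one, one_pow]
  rw [abs_of_pos (by positivity)]
  rw [mul_comm]

lemma cf_bound (a : ℕ → ℤ) (ha : ∀ k, 1 ≤ a (k + 1)) (n : ℕ) (hn : 1 ≤ n) :
    ∀ m, n ≤ m → |cfX a m - cfX a n| ≤ 1 / (cfDen a n : ℝ) - 1 / (cfDen a m : ℝ) := by
  intro m hm
  induction m, hm using Nat.le_induction with
  | base => simp
  | succ m hm ih =>
    have hq := cfDen_pos_real a ha m
    have hq1 := cfDen_pos_real a ha (m + 1)
    have hstep : |cfX a (m + 1) - cfX a m| ≤ 1 / (cfDen a m : ℝ) - 1 / (cfDen a (m + 1) : ℝ) := by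
      rw [cf_abs_diff a ha m]
      rw [div_sub_div _ _ hq.ne' hq1.ne']
      rw [div_le_div_iff₀ (by positivity) (by positivity)]
      have hge : cfDen a m + 1 ≤ cfDen a (m + 1) := cfDen_succ_ge a ha m (le_trans hn hm)
      have hge' : (cfDen a m : ℝ) + 1 ≤ (cfDen a (m + 1) : ℝ) := by exact_mod_cast hge
      nlinarith [mul_pos hq hq1]
    calc |cfX a (m + 1) - cfX a n|
        ≤ |cfX a (m + 1) - cfX a m| + |cfX a m - cfX a n| := abs_sub_le _ _ _
      _ ≤ (1 / (cfDen a m : ℝ) - 1 / (cfDen a (m + 1) : ℝ))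
            + (1 / (cfDen a n : ℝ) - 1 / (cfDen a m : ℝ)) := by linarith
      _ = 1 / (cfDen a n : ℝ) - 1 / (cfDen a (m + 1) : ℝ) := by ring

lemma cf_bound' (a : ℕ → ℤ) (ha : ∀ k, 1 ≤ a (k + 1)) (n : ℕ) (hn : 1 ≤ n)
    (m : ℕ) (hm : n ≤ m) : |cfX a m - cfX a n| ≤ 1 / (cfDen a n : ℝ) := by
  have h := cf_bound a ha n hn m hm
  have hq := cfDen_pos_real a ha m
  have : 0 ≤ 1 / (cfDen a m : ℝ) := by positivity
  linarith

lemma fib_real_tendsto : Filter.Tendsto (fun n : ℕ => (Nat.fib n : ℝ)) Filter.atTop Filter.atTop := by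
  apply tendsto_natCast_atTop_atTop.comp
  apply Filter.tendsto_atTop_mono' Filter.atTop ?_ Filter.tendsto_id
  filter_upwards [Filter.eventually_ge_atTop 5] with n hn
  exact Nat.le_fib_self hn

lemma tendsto_two_div_fib (g : ℕ → ℕ) (hg : Filter.Tendsto g Filter.atTop Filter.atTop) :
    Filter.Tendsto (fun n => 2 / (Nat.fib (g n) : ℝ)) Filter.atTop (nhds 0) := by
  have h := (fib_real_tendsto.comp hg).inv_tendsto_atTop
  have := h.const_mul (2 : ℝ)
  simpa [div_eq_mul_inv, Function.comp] using this

lemma cf_tendsto (a : ℕ → ℤ) (ha : ∀ k, 1 ≤ a (k + 1)) :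
    ∃ L : ℝ, Filter.Tendsto (cfX a) Filter.atTop (nhds L) ∧
      ∀ n, 1 ≤ n → |L - cfX a n| ≤ 1 / (cfDen a n : ℝ) := by
  have hC : CauchySeq (fun n => cfX a (n + 1)) := by
    apply cauchySeq_of_le_tendsto_0 (fun N => 2 / (Nat.fib (N + 2) : ℝ))
    · intro n m N hn hm
      have hb1 : |cfX a (n + 1) - cfX a (N + 1)| ≤ 1 / (cfDen a (N + 1) : ℝ) :=
        cf_bound' a ha (N + 1) (by omega) (n + 1) (by omega)
      have hb2 : |cfX a (m + 1) - cfX a (N + 1)| ≤ 1 / (cfDen a (N + 1) : ℝ) :=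
        cf_bound' a ha (N + 1) (by omega) (m + 1) (by omega)
      have hfib : (Nat.fib (N + 2) : ℝ) ≤ (cfDen a (N + 1) : ℝ) := by
        exact_mod_cast cfDen_fib a ha (N + 1)
      have hfpos : (0 : ℝ) < (Nat.fib (N + 2) : ℝ) := by
        exact_mod_cast Nat.fib_pos.2 (by omega)
      have hinv : 1 / (cfDen a (N + 1) : ℝ) ≤ 1 / (Nat.fib (N + 2) : ℝ) :=
        one_div_le_one_div_of_le hfpos hfib
      rw [Real.dist_eq]
      have htri := abs_sub_le (cfX a (n + 1)) (cfX a (N + 1)) (cfX a (m + 1))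
      have hcomm : |cfX a (N + 1) - cfX a (m + 1)| = |cfX a (m + 1) - cfX a (N + 1)| :=
        abs_sub_comm _ _
      have h2 : (2 : ℝ) / (Nat.fib (N + 2) : ℝ)
          = 1 / (Nat.fib (N + 2) : ℝ) + 1 / (Nat.fib (N + 2) : ℝ) := by ring
      rw [hcomm] at htri
      linarith
    · have hfib2 : Filter.Tendsto (fun N : ℕ => (Nat.fib (N + 2) : ℝ)) Filter.atTop Filter.atTop :=
        fib_real_tendsto.comp (Filter.tendsto_add_atTop_nat 2)
      simpa [div_eq_mul_inv] using hfib2.inv_tendsto_atTop.const_mul (2 : ℝ)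
  obtain ⟨L, hL⟩ := cauchySeq_tendsto_of_complete hC
  have hL' : Filter.Tendsto (cfX a) Filter.atTop (nhds L) :=
    (Filter.tendsto_add_atTop_iff_nat 1).1 hL
  refine ⟨L, hL', ?_⟩
  intro n hn
  have h1 : Filter.Tendsto (fun m => |cfX a m - cfX a n|) Filter.atTop (nhds |L - cfX a n|) :=
    ((hL'.sub_const _).abs)
  apply le_of_tendsto h1
  filter_upwards [Filter.eventually_ge_atTop n] with m hm
  exact cf_bound' a ha n hn m hm

lemma cf_congr (a b : ℕ → ℤ) (N : ℕ) (h : ∀ k, k ≤ N → a k = b k) :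
    ∀ n, n ≤ N → cfNum a n = cfNum b n ∧ cfDen a n = cfDen b n := by
  intro n
  induction n using Nat.strong_induction_on with
  | _ n ih =>
    match n with
    | 0 => intro _; simp [cfNum, cfDen, h 0 (by omega)]
    | 1 =>
      intro hn
      constructor
      · simp [cfNum, h 0 (by omega), h 1 (by omega)]
      · simp [cfDen, h 1 (by omega)]
    | (m + 2) =>
      intro hn
      obtain ⟨h1, h2⟩ := ih (m + 1) (by omega) (by omega)
      obtain ⟨h3, h4⟩ := ih m (by omega) (by omega)
      rw [cfNum, cfDen, cfNum, cfDen, h (m + 2) hn, h1, h2, h3, h4]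
      exact ⟨rfl, rfl⟩

lemma cfVal_eq (a : ℕ → ℤ) (ha : ∀ k, 1 ≤ a (k + 1)) {L : ℝ}
    (hL : Filter.Tendsto (cfX a) Filter.atTop (nhds L)) : cfVal a = L :=
  Filter.Tendsto.limUnder_eq hL

lemma cfVal_close (a b : ℕ → ℤ) (ha : ∀ k, 1 ≤ a (k + 1)) (hb : ∀ k, 1 ≤ b (k + 1))
    (N : ℕ) (hN : 1 ≤ N) (h : ∀ k, k ≤ N → a k = b k) :
    |cfVal a - cfVal b| ≤ 2 / (Nat.fib (N + 1) : ℝ) := by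
  obtain ⟨L, hL, hLb⟩ := cf_tendsto a ha
  obtain ⟨M, hM, hMb⟩ := cf_tendsto b hb
  rw [cfVal_eq a ha hL, cfVal_eq b hb hM]
  have hxy : cfX a N = cfX b N := by
    obtain ⟨h1, h2⟩ := cf_congr a b N h N le_rfl
    rw [cfX, cfX, h1, h2]
  have hfa : (Nat.fib (N + 1) : ℝ) ≤ (cfDen a N : ℝ) := by exact_mod_cast cfDen_fib a ha N
  have hfb : (Nat.fib (N + 1) : ℝ) ≤ (cfDen b N : ℝ) := by exact_mod_cast cfDen_fib b hb N
  have hfpos : (0 : ℝ) < (Nat.fib (N + 1) : ℝ) := by exact_mod_cast Nat.fib_pos.2 (by omega)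
  have h1 := hLb N hN
  have h2 := hMb N hN
  have hia : 1 / (cfDen a N : ℝ) ≤ 1 / (Nat.fib (N + 1) : ℝ) := one_div_le_one_div_of_le hfpos hfa
  have hib : 1 / (cfDen b N : ℝ) ≤ 1 / (Nat.fib (N + 1) : ℝ) := one_div_le_one_div_of_le hfpos hfb
  have habs : |L - M| ≤ |L - cfX a N| + |M - cfX b N| := by
    have h := abs_sub_le L (cfX a N) M
    have h2 : |cfX a N - M| = |M - cfX b N| := by rw [hxy, abs_sub_comm]
    linarith [h, h2.le, h2.ge]
  calc |L - M| ≤ |L - cfX a N| + |M - cfX b N| := habs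
    _ ≤ 1 / (Nat.fib (N + 1) : ℝ) + 1 / (Nat.fib (N + 1) : ℝ) :=
        add_le_add (h1.trans hia) (h2.trans hib)
    _ = 2 / (Nat.fib (N + 1) : ℝ) := by ring

/-- The sequence `0, 1, 1, 1, ...`. -/
def onesA : ℕ → ℤ := fun n => if n = 0 then 0 else 1

lemma onesA_ha : ∀ k, 1 ≤ onesA (k + 1) := fun k => by simp [onesA]

lemma onesA_fib : ∀ n, cfNum onesA n = (Nat.fib n : ℤ) ∧ cfDen onesA n = (Nat.fib (n + 1) : ℤ) := by
  intro n
  induction n using Nat.strong_induction_on with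
  | _ n ih =>
    match n with
    | 0 => simp [cfNum, cfDen, onesA]
    | 1 => simp [cfNum, cfDen, onesA]
    | (m + 2) =>
      obtain ⟨h1, h2⟩ := ih (m + 1) (by omega)
      obtain ⟨h3, h4⟩ := ih m (by omega)
      rw [cfNum, cfDen, h1, h2, h3, h4]
      constructor
      · rw [show onesA (m + 2) = 1 by simp [onesA], Nat.fib_add_two]
        push_cast; ring
      · rw [show onesA (m + 2) = 1 by simp [onesA], Nat.fib_add_two (n := m + 1)]
        push_cast; ring

lemma golden_val : cfVal onesA = (Real.sqrt 5 - 1) / 2 := by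
  obtain ⟨L, hL, _⟩ := cf_tendsto onesA onesA_ha
  rw [cfVal_eq onesA onesA_ha hL]
  have hx : ∀ n, cfX onesA n = (Nat.fib n : ℝ) / (Nat.fib (n + 1) : ℝ) := by
    intro n
    obtain ⟨h1, h2⟩ := onesA_fib n
    rw [cfX, h1, h2]; push_cast; ring_nf
  have hL0 : 0 ≤ L := by
    apply le_of_tendsto_of_tendsto' tendsto_const_nhds hL
    intro n
    rw [hx n]; positivity
  have hfix : L = 1 / (1 + L) := by
    have h1L : (0 : ℝ) < 1 + L := by linarith
    have hshift : Filter.Tendsto (fun n => cfX onesA (n + 1)) Filter.atTop (nhds L) :=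
      (Filter.tendsto_add_atTop_iff_nat 1).2 hL
    have heq : ∀ n, cfX onesA (n + 1) = 1 / (1 + cfX onesA n) := by
      intro n
      rw [hx, hx]
      have hf1 : (0 : ℝ) < (Nat.fib (n + 1) : ℝ) := by exact_mod_cast Nat.fib_pos.2 (by omega)
      have hf2 : (0 : ℝ) < (Nat.fib (n + 2) : ℝ) := by exact_mod_cast Nat.fib_pos.2 (by omega)
      have hadd : (Nat.fib (n + 2) : ℝ) = (Nat.fib (n + 1) : ℝ) + (Nat.fib n : ℝ) := by
        rw [Nat.fib_add_two]; push_cast; ring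
      rw [hadd]
      field_simp
    have hcont : Filter.Tendsto (fun n => 1 / (1 + cfX onesA n)) Filter.atTop (nhds (1 / (1 + L))) := by
      apply Filter.Tendsto.div tendsto_const_nhds (tendsto_const_nhds.add hL) h1L.ne'
    have : Filter.Tendsto (fun n => cfX onesA (n + 1)) Filter.atTop (nhds (1 / (1 + L))) := by
      simpa only [heq] using hcont
    exact tendsto_nhds_unique hshift this
  have h5 : Real.sqrt 5 ^ 2 = 5 := Real.sq_sqrt (by norm_num)
  have h5' : (0 : ℝ) ≤ Real.sqrt 5 := Real.sqrt_nonneg 5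
  have h1L : (0 : ℝ) < 1 + L := by linarith
  have heq2 : L ^ 2 + L - 1 = 0 := by
    have hthis := hfix
    field_simp at hthis
    linear_combination hthis
  have hfac : (2 * L + 1 - Real.sqrt 5) * (2 * L + 1 + Real.sqrt 5) = 0 := by
    linear_combination 4 * heq2 - h5
  rcases mul_eq_zero.1 hfac with h | h
  · linarith
  · linarith

end CFAux

namespace CFAux

/-- Prepend a `0` to a sequence of partial quotients. -/
def toA (s : ℕ → ℤ) : ℕ → ℤ := fun n => if n = 0 then 0 else s (n - 1)

lemma cfZero_toA (s : ℕ → ℤ) : cfZero s = cfVal (toA s) := rfl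

lemma per2212_ge (k : ℕ) : 1 ≤ per2212 k := by unfold per2212; split <;> norm_num

lemma seq1_ge (n k : ℕ) : 1 ≤ alphaStarSeq1 n k := by
  unfold alphaStarSeq1
  split
  · norm_num
  · exact per2212_ge _

lemma seq2_ge (n k : ℕ) : 1 ≤ alphaStarSeq2 n k := by
  unfold alphaStarSeq2
  split
  · norm_num
  · split
    · norm_num
    · exact seq1_ge _ _

lemma ha1 (n : ℕ) : ∀ k, 1 ≤ toA (alphaStarSeq1 n) (k + 1) := by
  intro k
  have h : toA (alphaStarSeq1 n) (k + 1) = alphaStarSeq1 n k := by simp [toA]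
  rw [h]; exact seq1_ge n k

lemma ha2 (n : ℕ) : ∀ k, 1 ≤ toA (alphaStarSeq2 n) (k + 1) := by
  intro k
  have h : toA (alphaStarSeq2 n) (k + 1) = alphaStarSeq2 n k := by simp [toA]
  rw [h]; exact seq2_ge n k

lemma agree1 (n : ℕ) (hn : 2 ≤ n) : ∀ k, k ≤ 2 * n - 2 → toA (alphaStarSeq1 n) k = onesA k := by
  intro k hk
  match k with
  | 0 => rfl
  | j + 1 =>
    have h1 : toA (alphaStarSeq1 n) (j + 1) = alphaStarSeq1 n j := by simp [toA]
    have h2 : onesA (j + 1) = 1 := by simp [onesA]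
    rw [h1, h2]
    unfold alphaStarSeq1
    rw [if_pos (by omega)]

lemma agree2 (n : ℕ) (hn : 2 ≤ n) : ∀ k, k ≤ 2 * n - 1 → toA (alphaStarSeq2 n) k = onesA k := by
  intro k hk
  match k with
  | 0 => rfl
  | j + 1 =>
    have h1 : toA (alphaStarSeq2 n) (j + 1) = alphaStarSeq2 n j := by simp [toA]
    have h2 : onesA (j + 1) = 1 := by simp [onesA]
    rw [h1, h2]
    unfold alphaStarSeq2
    rw [if_pos (by omega)]

lemma key_tendsto (c : ℕ → ℝ) (g : ℕ → ℕ) (hg : Filter.Tendsto g Filter.atTop Filter.atTop)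
    (hb : ∀ᶠ n in Filter.atTop, |c n - cfVal onesA| ≤ 2 / (Nat.fib (g n) : ℝ)) :
    Filter.Tendsto c Filter.atTop (nhds (cfVal onesA)) := by
  rw [← tendsto_sub_nhds_zero_iff]
  have hbnd := tendsto_two_div_fib g hg
  have hneg : Filter.Tendsto (fun n => -(2 / (Nat.fib (g n) : ℝ))) Filter.atTop (nhds 0) := by
    simpa using hbnd.neg
  apply tendsto_of_tendsto_of_tendsto_of_le_of_le' hneg hbnd
  · filter_upwards [hb] with n hn
    have := abs_le.1 hn
    linarith [this.1]
  · filter_upwards [hb] with n hn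
    exact (abs_le.1 hn).2

end CFAux

open CFAux in
/-- `α_n* → 1 + √5`, and `[0; \overline{1}] = (√5 - 1)/2`, so `2 + 2[0;\overline{1}] = 1 + √5`. -/
theorem stmt6 :
    Tendsto alphaStar atTop (nhds (1 + Real.sqrt 5)) ∧
    cfZero (fun _ => 1) = (Real.sqrt 5 - 1) / 2 ∧
    2 + 2 * cfZero (fun _ => 1) = 1 + Real.sqrt 5 := by
  have hones : cfZero (fun _ => 1) = cfVal onesA := rfl
  refine ⟨?_, ?_, ?_⟩
  · have hg1 : Tendsto (fun n => 2 * n - 2 + 1) atTop atTop :=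
      Filter.tendsto_atTop_atTop.2 fun b => ⟨b + 2, fun n hn => by omega⟩
    have hg2 : Tendsto (fun n => 2 * n - 1 + 1) atTop atTop :=
      Filter.tendsto_atTop_atTop.2 fun b => ⟨b + 2, fun n hn => by omega⟩
    have h1 : Tendsto (fun n => cfZero (alphaStarSeq1 n)) atTop (nhds (cfVal onesA)) := by
      apply key_tendsto _ (fun n => 2 * n - 2 + 1) hg1
      filter_upwards [eventually_ge_atTop 2] with n hn
      rw [cfZero_toA]
      exact cfVal_close _ _ (ha1 n) onesA_ha (2 * n - 2) (by omega) (agree1 n hn)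
    have h2 : Tendsto (fun n => cfZero (alphaStarSeq2 n)) atTop (nhds (cfVal onesA)) := by
      apply key_tendsto _ (fun n => 2 * n - 1 + 1) hg2
      filter_upwards [eventually_ge_atTop 2] with n hn
      rw [cfZero_toA]
      exact cfVal_close _ _ (ha2 n) onesA_ha (2 * n - 1) (by omega) (agree2 n hn)
    have hsum : Tendsto alphaStar atTop (nhds (2 + cfVal onesA + cfVal onesA)) :=
      ((tendsto_const_nhds (x := (2 : ℝ))).add h1).add h2
    have hval : (2 : ℝ) + cfVal onesA + cfVal onesA = 1 + Real.sqrt 5 := by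
      rw [golden_val]; ring
    rwa [hval] at hsum
  · rw [hones, golden_val]
  · rw [hones, golden_val]; ring
end

section
/- The doubly infinite sequence (\overline{2,1,2,2}, 1,...,1 (2n ones), 2, 1,...,1 (2n+1 ones), 2, 1,...,1 (2n ones), \overline{2,2,1,2}) is eventually periodic on both sides but not purely periodic; in particular it is not of the form (\overline{P}) for any finite block P. -/
open Filter

/-- The doubly infinite sequence
`(\overline{2,1,2,2}, 1^{2n}, 2, 1^{2n+1}, 2, 1^{2n}, \overline{2,2,1,2})`,
with the central block occupying positions `0, ..., 6n+2`. -/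
def gburSeq (n : ℕ) : ℤ → ℤ := fun i =>
  if i < 0 then (if (-i - 1) % 4 = 2 then 1 else 2)
  else if i ≤ 6 * (n : ℤ) + 2 then (if i = 2 * (n : ℤ) ∨ i = 4 * (n : ℤ) + 2 then 2 else 1)
  else (if (i - (6 * (n : ℤ) + 3)) % 4 = 2 then 1 else 2)

lemma gburR (n : ℕ) (i : ℤ) (h : 6*(n:ℤ)+2 < i) :
    gburSeq n i = if (i - (6 * (n : ℤ) + 3)) % 4 = 2 then 1 else 2 := by
  unfold gburSeq; rw [if_neg (by omega), if_neg (by omega)]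

lemma gburL (n : ℕ) (i : ℤ) (h : i < 0) :
    gburSeq n i = if (-i - 1) % 4 = 2 then 1 else 2 := by
  unfold gburSeq; rw [if_pos h]

lemma gburM (n : ℕ) (i : ℤ) (h0 : 0 ≤ i) (h1 : i ≤ 6*(n:ℤ)+2) :
    gburSeq n i = if i = 2 * (n : ℤ) ∨ i = 4 * (n : ℤ) + 2 then 2 else 1 := by
  unfold gburSeq; rw [if_neg (by omega), if_pos h1]

/-- The sequence `gburSeq n` is eventually periodic on both sides but not purely
periodic: it is not of the form `(\overline{P})` for any finite block `P`. -/
theorem stmt15 (n : ℕ) (hn : 1 ≤ n) :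
    (∃ p : ℤ, 1 ≤ p ∧ ∃ N : ℤ, ∀ i, N ≤ i → gburSeq n (i + p) = gburSeq n i) ∧
    (∃ p : ℤ, 1 ≤ p ∧ ∃ N : ℤ, ∀ i, i ≤ N → gburSeq n (i + p) = gburSeq n i) ∧
    ¬ ∃ p : ℤ, 1 ≤ p ∧ ∀ i, gburSeq n (i + p) = gburSeq n i := by
  refine ⟨⟨4, by norm_num, 6*(n:ℤ)+3, fun i hi => ?_⟩,
    ⟨4, by norm_num, -5, fun i hi => ?_⟩, ?_⟩
  · rw [gburR n i (by omega), gburR n (i+4) (by omega)]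
    have h : (i + 4 - (6 * (n:ℤ) + 3)) % 4 = (i - (6 * (n:ℤ) + 3)) % 4 := by omega
    rw [h]
  · rw [gburL n i (by omega), gburL n (i+4) (by omega)]
    have h : (-(i+4) - 1) % 4 = (-i - 1) % 4 := by omega
    rw [h]
  · rintro ⟨p, hp, hper⟩
    have key : ∀ k : ℕ, ∀ i : ℤ, gburSeq n (i + (k : ℤ) * p) = gburSeq n i := by
      intro k
      induction k with
      | zero => simp
      | succ k ih =>
        intro i
        have h : i + ((k + 1 : ℕ) : ℤ) * p = (i + p) + (k : ℤ) * p := by push_cast; ring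
        rw [h, ih, hper]
    have h1 := key (4*n+2) (2*(n:ℤ)+1)
    have h2 := key (4*n+2) (2*(n:ℤ)+2)
    obtain ⟨K, hK1, hK2, hK3⟩ : ∃ K : ℤ, 4*(n:ℤ)+2 ≤ K ∧
        gburSeq n (2*(n:ℤ)+1+K) = gburSeq n (2*(n:ℤ)+1) ∧
        gburSeq n (2*(n:ℤ)+2+K) = gburSeq n (2*(n:ℤ)+2) :=
      ⟨((4*n+2 : ℕ) : ℤ) * p, by push_cast; nlinarith, h1, h2⟩
    clear h1 h2 hper key hp
    rw [gburR n _ (by omega), gburM n _ (by omega) (by omega)] at hK2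
    rw [gburR n _ (by omega), gburM n _ (by omega) (by omega)] at hK3
    split_ifs at hK2 hK3 <;> omega
end

section
/- Let x = [0; 1,...,1 (2n ones), 2, c_1, c_2, ...] where (c_1, c_2, ...) is a sequence with entries in {1,2} containing no pattern (2,1,2,1), and let x_0 = [0; 1,...,1 (2n ones), \overline{2,2,1,2}]. Then x ≤ x_0. -/
open Filter Topology

namespace CF17

def Good (s : ℕ → ℤ) : Prop := ∀ n, 1 ≤ s n

def AOf (s : ℕ → ℤ) : ℕ → ℤ := fun n => if n = 0 then 0 else s (n - 1)

def sh (s : ℕ → ℤ) : ℕ → ℤ := fun n => s (n + 1)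

lemma two_step {P : ℕ → Prop} (h0 : P 0) (h1 : P 1)
    (hs : ∀ n, P n → P (n + 1) → P (n + 2)) : ∀ n, P n := by
  intro n
  induction n using Nat.strong_induction_on with
  | _ n ih =>
    match n with
    | 0 => exact h0
    | 1 => exact h1
    | n + 2 => exact hs n (ih n (by omega)) (ih (n + 1) (by omega))

variable {s : ℕ → ℤ}

lemma num0 : cfNum (AOf s) 0 = 0 := by simp [cfNum, AOf]
lemma num1 : cfNum (AOf s) 1 = 1 := by simp [cfNum, AOf]
lemma num2 (n : ℕ) : cfNum (AOf s) (n + 2) = s (n + 1) * cfNum (AOf s) (n + 1) + cfNum (AOf s) n := by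
  rfl
lemma den0 : cfDen (AOf s) 0 = 1 := rfl
lemma den1 : cfDen (AOf s) 1 = s 0 := rfl
lemma den2 (n : ℕ) : cfDen (AOf s) (n + 2) = s (n + 1) * cfDen (AOf s) (n + 1) + cfDen (AOf s) n := by
  rfl

lemma basic (hs : Good s) : ∀ n, (0 ≤ cfNum (AOf s) n ∧ cfNum (AOf s) n ≤ cfDen (AOf s) n)
    ∧ (1 ≤ cfDen (AOf s) n ∧ (n : ℤ) ≤ cfDen (AOf s) n) := by
  apply two_step
  · simp [num0, den0]
  · simpa [num1, den1] using hs 0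
  · intro n ⟨⟨hp1, hpq1⟩, hq1, hqn1⟩ ⟨⟨hp2, hpq2⟩, hq2, hqn2⟩
    have ha := hs (n + 1)
    rw [num2, den2]
    push_cast
    have hqn2' : (n:ℤ) + 1 ≤ cfDen (AOf s) (n + 1) := by exact_mod_cast hqn2
    have key : cfDen (AOf s) (n + 1) ≤ s (n + 1) * cfDen (AOf s) (n + 1) :=
      le_mul_of_one_le_left (by linarith) ha
    refine ⟨⟨by positivity, ?_⟩, ?_, ?_⟩
    · nlinarith
    · nlinarith
    · nlinarith

lemma det : ∀ n, cfNum (AOf s) (n + 1) * cfDen (AOf s) n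
    - cfNum (AOf s) n * cfDen (AOf s) (n + 1) = (-1) ^ n := by
  intro n
  induction n with
  | zero => simp [num0, num1, den0, den1]
  | succ n ih => rw [num2, den2]; ring_nf; ring_nf at ih; linarith [ih]


noncomputable def X (s : ℕ → ℤ) (n : ℕ) : ℝ := (cfNum (AOf s) n : ℝ) / (cfDen (AOf s) n : ℝ)

lemma denR_pos (hs : Good s) (n : ℕ) : (0:ℝ) < (cfDen (AOf s) n : ℝ) := by
  exact_mod_cast lt_of_lt_of_le zero_lt_one (by exact_mod_cast (basic hs n).2.1)

lemma X_nonneg (hs : Good s) (n : ℕ) : 0 ≤ X s n :=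
  div_nonneg (by exact_mod_cast (basic hs n).1.1) (le_of_lt (denR_pos hs n))

lemma X_le_one (hs : Good s) (n : ℕ) : X s n ≤ 1 :=
  div_le_one_of_le₀ (by exact_mod_cast (basic hs n).1.2) (le_of_lt (denR_pos hs n))

lemma X_zero : X s 0 = 0 := by simp [X, num0]

lemma X_diff (hs : Good s) (n : ℕ) :
    X s (n + 1) - X s n = (-1) ^ n / ((cfDen (AOf s) n : ℝ) * (cfDen (AOf s) (n + 1) : ℝ)) := by
  have h1 := denR_pos hs n
  have h2 := denR_pos hs (n + 1)
  have hd := det (s := s) n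
  have hd' : ((cfNum (AOf s) (n + 1) : ℝ) * (cfDen (AOf s) n : ℝ)
      - (cfNum (AOf s) n : ℝ) * (cfDen (AOf s) (n + 1) : ℝ)) = (-1) ^ n := by
    exact_mod_cast hd
  rw [X, X, div_sub_div _ _ (ne_of_gt h2) (ne_of_gt h1)]
  rw [mul_comm ((cfDen (AOf s) n : ℝ))]
  congr 1
  linarith [hd']

lemma X_dist (hs : Good s) (n : ℕ) :
    dist (X s n) (X s (n + 1)) ≤ 4 / (((n:ℝ) + 1) * ((n:ℝ) + 2)) := by
  have h1 := denR_pos hs n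
  have h2 := denR_pos hs (n + 1)
  have b1 : ((n:ℝ) + 1) / 2 ≤ (cfDen (AOf s) n : ℝ) := by
    rcases Nat.eq_zero_or_pos n with h | h
    · subst h; norm_num [den0]
    · have := (basic hs n).2.2
      have : (n:ℝ) ≤ (cfDen (AOf s) n : ℝ) := by exact_mod_cast this
      have h1n : (1:ℝ) ≤ (n:ℝ) := by exact_mod_cast h
      linarith
  have b2 : ((n:ℝ) + 2) / 2 ≤ (cfDen (AOf s) (n + 1) : ℝ) := by
    have := (basic hs (n+1)).2.2
    have : ((n:ℝ) + 1) ≤ (cfDen (AOf s) (n + 1) : ℝ) := by exact_mod_cast this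
    linarith
  have hpos : (0:ℝ) < ((n:ℝ) + 1) * ((n:ℝ) + 2) := by positivity
  rw [Real.dist_eq, abs_sub_comm, X_diff hs n, abs_div, abs_pow, abs_neg, abs_one, one_pow]
  rw [abs_of_pos (by positivity)]
  rw [div_le_div_iff₀ (by positivity) hpos]
  have : ((n:ℝ) + 1) * ((n:ℝ) + 2) / 4 ≤ (cfDen (AOf s) n : ℝ) * (cfDen (AOf s) (n + 1) : ℝ) := by
    calc ((n:ℝ) + 1) * ((n:ℝ) + 2) / 4 = (((n:ℝ) + 1)/2) * (((n:ℝ) + 2)/2) := by ring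
    _ ≤ _ := mul_le_mul b1 b2 (by positivity) (le_of_lt h1)
  linarith

lemma tendsto_X (hs : Good s) : Tendsto (X s) atTop (𝓝 (cfZero s)) := by
  have hsum : Summable (fun n : ℕ => 4 / (((n:ℝ) + 1) * ((n:ℝ) + 2))) := by
    have h2 : Summable (fun n : ℕ => 1 / ((n:ℝ)+1)^2) := by
      exact_mod_cast (summable_nat_add_iff 1).2 (Real.summable_one_div_nat_pow.2 one_lt_two)
    apply Summable.of_nonneg_of_le (fun n => by positivity)
      (fun n => ?_) (h2.mul_left 4)
    rw [div_le_iff₀ (by positivity)]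
    have : (0:ℝ) < ((n:ℝ)+1)^2 := by positivity
    rw [mul_comm (4:ℝ) (1 / ((n:ℝ)+1)^2), div_mul_eq_mul_div, one_mul, div_mul_eq_mul_div]
    rw [le_div_iff₀ this]
    nlinarith [Nat.cast_nonneg (α := ℝ) n]
  have hc : CauchySeq (X s) := cauchySeq_of_dist_le_of_summable _ (X_dist hs) hsum
  obtain ⟨L, hL⟩ := cauchySeq_tendsto_of_complete hc
  have : cfZero s = L := hL.limUnder_eq
  rwa [this]

lemma cfZero_nonneg (hs : Good s) : 0 ≤ cfZero s :=
  ge_of_tendsto (tendsto_X hs) (Eventually.of_forall (X_nonneg hs))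

lemma cfZero_le_one (hs : Good s) : cfZero s ≤ 1 :=
  le_of_tendsto (tendsto_X hs) (Eventually.of_forall (X_le_one hs))


lemma shift_rec : ∀ n, cfNum (AOf s) (n + 1) = cfDen (AOf (sh s)) n
    ∧ cfDen (AOf s) (n + 1) = s 0 * cfDen (AOf (sh s)) n + cfNum (AOf (sh s)) n := by
  apply two_step
  · simp [num1, den0, den1, num0]
  · constructor
    · show cfNum (AOf s) 2 = cfDen (AOf (sh s)) 1
      rw [num2, num1, num0, den1]; simp [sh]
    · show cfDen (AOf s) 2 = _
      rw [den2, den1, den0, num1]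
      have : cfDen (AOf (sh s)) 1 = s 1 := den1
      rw [this]; simp [sh]; ring
  · intro n ⟨ihp1, ihq1⟩ ⟨ihp2, ihq2⟩
    have hsh : (sh s) (n + 1) = s (n + 2) := rfl
    constructor
    · show cfNum (AOf s) (n + 1 + 2) = cfDen (AOf (sh s)) (n + 2)
      rw [num2 (n + 1), den2 (s := sh s) n, ihp1, ihp2, hsh]
    · show cfDen (AOf s) (n + 1 + 2) = s 0 * cfDen (AOf (sh s)) (n + 2) + cfNum (AOf (sh s)) (n + 2)
      rw [den2 (n + 1), den2 (s := sh s) n, num2 (s := sh s) n, ihq1, ihq2, hsh]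
      ring

lemma good_sh (hs : Good s) : Good (sh s) := fun n => hs (n + 1)

lemma X_shift (hs : Good s) (n : ℕ) :
    X s (n + 1) = 1 / ((s 0 : ℝ) + X (sh s) n) := by
  have h1 := denR_pos (good_sh hs) n
  have hp := (basic (good_sh hs) n).1.1
  have hs0 : (1:ℤ) ≤ s 0 := hs 0
  have hden : (0:ℝ) < (s 0 : ℝ) * (cfDen (AOf (sh s)) n : ℝ) + (cfNum (AOf (sh s)) n : ℝ) := by
    have : (1:ℝ) ≤ (s 0 : ℝ) := by exact_mod_cast hs0
    have : (0:ℝ) ≤ (cfNum (AOf (sh s)) n : ℝ) := by exact_mod_cast hp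
    nlinarith
  rw [X, (shift_rec (s := s) n).1, (shift_rec (s := s) n).2, X]
  push_cast
  rw [div_eq_div_iff (ne_of_gt hden) (by
    have : (0:ℝ) < (s 0 : ℝ) + (cfNum (AOf (sh s)) n : ℝ) / (cfDen (AOf (sh s)) n : ℝ) := by
      have hx : (0:ℝ) ≤ (cfNum (AOf (sh s)) n : ℝ) / (cfDen (AOf (sh s)) n : ℝ) :=
        div_nonneg (by exact_mod_cast hp) (le_of_lt h1)
      have : (1:ℝ) ≤ (s 0 : ℝ) := by exact_mod_cast hs0
      linarith
    exact ne_of_gt this)]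
  field_simp

lemma cfZero_shift (hs : Good s) : cfZero s = 1 / ((s 0 : ℝ) + cfZero (sh s)) := by
  have h1 : Tendsto (fun n => X s (n + 1)) atTop (𝓝 (cfZero s)) :=
    (tendsto_X hs).comp (tendsto_add_atTop_nat 1)
  have hden : (0:ℝ) < (s 0 : ℝ) + cfZero (sh s) := by
    have : (1:ℝ) ≤ (s 0 : ℝ) := by exact_mod_cast hs 0
    linarith [cfZero_nonneg (good_sh hs)]
  have h2 : Tendsto (fun n => 1 / ((s 0 : ℝ) + X (sh s) n)) atTop
      (𝓝 (1 / ((s 0 : ℝ) + cfZero (sh s)))) := by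
    apply Tendsto.div tendsto_const_nhds (Tendsto.const_add _ (tendsto_X (good_sh hs)))
      (ne_of_gt hden)
  have h3 : (fun n => X s (n + 1)) = fun n => 1 / ((s 0 : ℝ) + X (sh s) n) :=
    funext fun n => X_shift hs n
  rw [h3] at h1
  exact tendsto_nhds_unique h1 h2

lemma cfZero_pos (hs : Good s) : 0 < cfZero s := by
  rw [cfZero_shift hs]
  have h1 : (1:ℝ) ≤ (s 0 : ℝ) := by exact_mod_cast hs 0
  have h0 := cfZero_nonneg (good_sh hs)
  exact one_div_pos.mpr (by linarith)

lemma cfZero_half_le (hs : Good s) (h : s 0 = 1) : 1 / 2 ≤ cfZero s := by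
  rw [cfZero_shift hs, h]
  have h1 := cfZero_le_one (good_sh hs)
  have h0 := cfZero_nonneg (good_sh hs)
  push_cast
  rw [div_le_div_iff₀ (by norm_num) (by linarith)]
  linarith

lemma cfZero_le_half (hs : Good s) (h : s 0 = 2) : cfZero s ≤ 1 / 2 := by
  rw [cfZero_shift hs, h]
  have h0 := cfZero_nonneg (good_sh hs)
  push_cast
  rw [div_le_div_iff₀ (by linarith) (by norm_num)]
  linarith

/-- Monotone step: equal heads, reversed tails. -/
lemma step {t : ℕ → ℤ} (hs : Good s) (ht : Good t) (h0 : s 0 = t 0)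
    (h : cfZero (sh t) ≤ cfZero (sh s)) : cfZero s ≤ cfZero t := by
  rw [cfZero_shift hs, cfZero_shift ht, h0]
  have hden : (0:ℝ) < (t 0 : ℝ) + cfZero (sh t) := by
    have : (1:ℝ) ≤ (t 0 : ℝ) := by exact_mod_cast ht 0
    linarith [cfZero_nonneg (good_sh ht)]
  apply one_div_le_one_div_of_le hden
  linarith


/-- The word `2,1,2,2,2,1,2,2,...`. -/
def W : ℕ → ℤ := fun j => if j % 4 = 1 then 1 else 2

lemma goodW : Good W := fun n => by unfold W; split <;> norm_num

lemma W_per (j : ℕ) : W (j + 4) = W j := by simp [W, Nat.add_mod_right]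

lemma shW4 : sh (sh (sh (sh W))) = W := by
  funext j
  show W (j + 1 + 1 + 1 + 1) = W j
  rw [show j + 1 + 1 + 1 + 1 = j + 4 from rfl, W_per]

def Avoid (c : ℕ → ℤ) : Prop := (∀ k, c k = 1 ∨ c k = 2) ∧
  ∀ i, ¬ (c i = 2 ∧ c (i + 1) = 1 ∧ c (i + 2) = 2 ∧ c (i + 3) = 1)

variable {c : ℕ → ℤ}

lemma Avoid.good (hc : Avoid c) : Good c := fun n => by rcases hc.1 n with h | h <;> omega

lemma Avoid.sh (hc : Avoid c) : Avoid (CF17.sh c) :=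
  ⟨fun k => hc.1 (k + 1), fun i => hc.2 (i + 1)⟩

lemma dichotomy (hc : Avoid c) :
    cfZero W ≤ cfZero c ∨ (c 0 = 2 ∧ c 1 = 1 ∧ c 2 = 2 ∧ c 3 = 2) := by
  have hgc := hc.good
  rcases hc.1 0 with h0 | h0
  · left
    exact le_trans (cfZero_le_half goodW rfl) (cfZero_half_le hgc h0)
  rcases hc.1 1 with h1 | h1
  swap
  · -- c 0 = 2, c 1 = 2
    left
    refine step goodW hgc (by rw [h0]; rfl) ?_
    exact le_trans (cfZero_le_half (good_sh hgc) h1) (cfZero_half_le (good_sh goodW) rfl)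
  rcases hc.1 2 with h2 | h2
  · -- c 0 = 2, c 1 = 1, c 2 = 1
    left
    refine step goodW hgc (by rw [h0]; rfl) ?_
    refine step (good_sh hgc) (good_sh goodW) (by show c 1 = W 1; rw [h1]; rfl) ?_
    exact le_trans (cfZero_le_half (good_sh (good_sh goodW)) rfl)
      (cfZero_half_le (good_sh (good_sh hgc)) h2)
  · -- c 0 = 2, c 1 = 1, c 2 = 2 : c 3 forced to be 2
    right
    rcases hc.1 3 with h3 | h3
    · exact absurd ⟨h0, h1, h2, h3⟩ (hc.2 0)
    · exact ⟨h0, h1, h2, h3⟩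

lemma bridge (hc : Avoid c) (h0 : c 0 = 2) (h1 : c 1 = 1) (h2 : c 2 = 2) (h3 : c 3 = 2)
    (h : cfZero W ≤ cfZero (sh (sh (sh (sh c))))) : cfZero W ≤ cfZero c := by
  have hgc := hc.good
  refine step goodW hgc (by rw [h0]; rfl) ?_
  refine step (good_sh hgc) (good_sh goodW) (by show c 1 = W 1; rw [h1]; rfl) ?_
  refine step (good_sh (good_sh goodW)) (good_sh (good_sh hgc))
    (by show W 2 = c 2; rw [h2]; rfl) ?_
  refine step (good_sh (good_sh (good_sh hgc))) (good_sh (good_sh (good_sh goodW)))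
    (by show c 3 = W 3; rw [h3]; rfl) ?_
  rw [shW4]
  exact h

lemma approx : ∀ k : ℕ, ∀ c : ℕ → ℤ, Avoid c →
    cfZero W ≤ cfZero c ∨ ∀ j, j < 4 * k → c j = W j := by
  intro k
  induction k with
  | zero => exact fun c _ => Or.inr (fun j hj => absurd hj (by omega))
  | succ k ih =>
    intro c hc
    rcases dichotomy hc with h | ⟨h0, h1, h2, h3⟩
    · exact Or.inl h
    have hc4 : Avoid (sh (sh (sh (sh c)))) := hc.sh.sh.sh.sh
    rcases ih _ hc4 with h | hagree
    · exact Or.inl (bridge hc h0 h1 h2 h3 h)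
    · right
      intro j hj
      by_cases hj4 : j < 4
      · interval_cases j
        · exact h0
        · exact h1
        · exact h2
        · exact h3
      · have e1 : c j = sh (sh (sh (sh c))) (j - 4) := by
          show c j = c (j - 4 + 1 + 1 + 1 + 1)
          congr 1
          omega
        have e2 : W j = W (j - 4) := by
          conv_lhs => rw [show j = j - 4 + 4 by omega, W_per]
        rw [e1, e2]
        exact hagree (j - 4) (by omega)

lemma core (hc : Avoid c) : cfZero W ≤ cfZero c := by
  by_contra hlt
  have hcw : c = W := by
    funext j
    rcases approx (j + 1) c hc with h | h
    · exact absurd h hlt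
    · exact h j (by omega)
  rw [hcw] at hlt
  exact hlt le_rfl


def LSeq (n : ℕ) (c : ℕ → ℤ) : ℕ → ℤ :=
  fun k => if k < 2 * n then 1 else if k = 2 * n then 2 else c (k - (2 * n + 1))

def RSeq (n : ℕ) : ℕ → ℤ :=
  fun k => if k < 2 * n then 1 else per2212 (k - 2 * n)

lemma goodL (n : ℕ) (hc : ∀ k, c k = 1 ∨ c k = 2) : Good (LSeq n c) := by
  intro k
  unfold LSeq
  split
  · norm_num
  split
  · norm_num
  · rcases hc (k - (2 * n + 1)) with h | h <;> simp [h]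

lemma goodR (n : ℕ) : Good (RSeq n) := by
  intro k
  unfold RSeq per2212
  split
  · norm_num
  split <;> norm_num

lemma main (hc : ∀ k, c k = 1 ∨ c k = 2)
    (hpat : ∀ i, ¬ (c i = 2 ∧ c (i + 1) = 1 ∧ c (i + 2) = 2 ∧ c (i + 3) = 1)) :
    ∀ n : ℕ, cfZero (LSeq n c) ≤ cfZero (RSeq n) := by
  have hA : Avoid c := ⟨hc, hpat⟩
  intro n
  induction n with
  | zero =>
    have eL : sh (LSeq 0 c) = c := by
      funext j
      show LSeq 0 c (j + 1) = c j
      unfold LSeq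
      rw [if_neg (by omega), if_neg (by omega),
        show j + 1 - (2 * 0 + 1) = j by omega]
    have eR : sh (RSeq 0) = W := by
      funext j
      show RSeq 0 (j + 1) = W j
      have e : j + 1 - 2 * 0 = j + 1 := by omega
      unfold RSeq per2212 W
      rw [if_neg (by omega), e]
      by_cases h : j % 4 = 1
      · rw [if_pos (by omega), if_pos h]
      · rw [if_neg (by omega), if_neg h]
    refine step (goodL 0 hc) (goodR 0) ?_ ?_
    · show (2:ℤ) = per2212 0
      rfl
    · rw [eL, eR]
      exact core hA
  | succ n ih =>
    have eL : sh (sh (LSeq (n + 1) c)) = LSeq n c := by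
      funext j
      show LSeq (n + 1) c (j + 1 + 1) = LSeq n c j
      unfold LSeq
      by_cases h1 : j < 2 * n
      · rw [if_pos (by omega), if_pos h1]
      by_cases h2 : j = 2 * n
      · rw [if_neg (by omega), if_pos (by omega), if_neg h1, if_pos h2]
      · rw [if_neg (by omega), if_neg (by omega), if_neg h1, if_neg h2]
        congr 1
        omega
    have eR : sh (sh (RSeq (n + 1))) = RSeq n := by
      funext j
      show RSeq (n + 1) (j + 1 + 1) = RSeq n j
      unfold RSeq
      by_cases h1 : j < 2 * n
      · rw [if_pos (by omega), if_pos h1]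
      · rw [if_neg (by omega), if_neg h1]
        congr 1
        omega
    have h0 : (0:ℕ) < 2 * (n + 1) := by omega
    have h1 : (1:ℕ) < 2 * (n + 1) := by omega
    refine step (goodL (n + 1) hc) (goodR (n + 1)) ?_ ?_
    · show LSeq (n + 1) c 0 = RSeq (n + 1) 0
      unfold LSeq RSeq
      rw [if_pos h0, if_pos h0]
    refine step (good_sh (goodR (n + 1))) (good_sh (goodL (n + 1) hc)) ?_ ?_
    · show RSeq (n + 1) 1 = LSeq (n + 1) c 1
      unfold LSeq RSeq
      rw [if_pos h1, if_pos h1]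
    · rw [eL, eR]
      exact ih

end CF17

/-- If `x = [0; 1^{2n}, 2, c 0, c 1, ...]` with `(c k)` taking values in `{1,2}` and
avoiding the pattern `(2,1,2,1)`, then `x ≤ x₀ = [0; 1^{2n}, \overline{2,2,1,2}]`. -/
theorem stmt17 (n : ℕ) (c : ℕ → ℤ) (hc : ∀ k, c k = 1 ∨ c k = 2)
    (hpat : ¬ ∃ i : ℕ, c i = 2 ∧ c (i + 1) = 1 ∧ c (i + 2) = 2 ∧ c (i + 3) = 1) :
    cfZero (fun k => if k < 2 * n then 1 else if k = 2 * n then 2 else c (k - (2 * n + 1)))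
      ≤ cfZero (fun k => if k < 2 * n then 1 else per2212 (k - 2 * n)) := by
  exact CF17.main hc (fun i h => hpat ⟨i, h⟩) n
end
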